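/- Let Cat₀ be the portion of the catenoid Cat = {x ∈ ℝ³ : cosh²(x₃) = x₁² + x₂²} with |x₃| < t₀, where t₀ > 0 satisfies cosh(t₀) = t₀·sinh(t₀). Then for every point x ∈ Cat₀, the open ray from the origin through x intersects Cat₀ in exactly the one point x. -/

import Mathlib

open Real Set Pointwise

abbrev R3 := EuclideanSpace ℝ (Fin 3)

/-- The middle portion `Cat₀` of the standard vertical catenoid: the points with
`|x₃| < t₀`. -/
def Cat0 (t₀ : ℝ) : Set R3 :=
  {x | Real.cosh (x 2) ^ 2 = x 0 ^ 2 + x 1 ^ 2 ∧ |x 2| < t₀}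

/-!
A point of the ray through `x ∈ Cat₀` with height `λ x₃` lies on the catenoid iff
`cosh (λ x₃) = λ cosh x₃`, i.e. iff `s ↦ cosh s / s` takes the same value at `|x₃|` and
`λ |x₃|`. Its derivative `(s sinh s - cosh s) / s²` is negative below the unique positive root
`t₀` of `s sinh s = cosh s`, so this function is injective on `(0, t₀)` and `λ = 1`.
-/

lemma strictMonoOn_mul_sinh_sub_cosh :
    StrictMonoOn (fun s => s * sinh s - cosh s) (Ici 0) := by
  apply strictMonoOn_of_deriv_pos (convex_Ici 0) (by fun_prop)
  intro s hs
  rw [interior_Ici] at hs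
  have hderiv : HasDerivAt (fun s => s * sinh s - cosh s) (s * cosh s) s :=
    (((hasDerivAt_id' s).mul (hasDerivAt_sinh s)).sub (hasDerivAt_cosh s)).congr_deriv (by ring)
  rw [hderiv.deriv]
  exact mul_pos hs (cosh_pos s)

lemma mul_sinh_lt_cosh_of_lt {t₀ s : ℝ} (heq : cosh t₀ = t₀ * sinh t₀) (hs : 0 ≤ s)
    (hst : s < t₀) : s * sinh s < cosh s := by
  have := strictMonoOn_mul_sinh_sub_cosh hs (hs.trans hst.le) hst
  simp only at this
  linarith

lemma strictAntiOn_cosh_div {t₀ : ℝ} (heq : cosh t₀ = t₀ * sinh t₀) :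
    StrictAntiOn (fun s => cosh s / s) (Ioo 0 t₀) := by
  apply strictAntiOn_of_deriv_neg (convex_Ioo 0 t₀)
  · exact continuous_cosh.continuousOn.div continuousOn_id fun s hs => hs.1.ne'
  intro s hs
  rw [interior_Ioo] at hs
  have hderiv : HasDerivAt (fun s => cosh s / s) ((sinh s * s - cosh s * 1) / s ^ 2) s :=
    (hasDerivAt_cosh s).div (hasDerivAt_id s) hs.1.ne'
  rw [hderiv.deriv]
  have := mul_sinh_lt_cosh_of_lt heq hs.1.le hs.2
  apply div_neg_of_neg_of_pos <;> nlinarith [hs.1]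

lemma eq_one_of_cosh_mul_eq_mul_cosh {t₀ l s : ℝ} (heq : cosh t₀ = t₀ * sinh t₀)
    (hl : 0 < l) (hs : 0 ≤ s) (hst : s < t₀) (hlst : l * s < t₀)
    (h : cosh (l * s) = l * cosh s) : l = 1 := by
  rcases hs.eq_or_lt with rfl | hs
  · simpa using h.symm
  have hdiv : cosh (l * s) / (l * s) = cosh s / s := by
    rw [h, mul_div_mul_left _ _ hl.ne']
  have hls : l * s = s :=
    (strictAntiOn_cosh_div heq).injOn ⟨by positivity, hlst⟩ ⟨hs, hst⟩ hdiv
  nlinarith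

lemma cosh_mul_eq_mul_cosh_of_smul_mem {x : R3} {l : ℝ} (hl : 0 < l)
    (hx : cosh (x 2) ^ 2 = x 0 ^ 2 + x 1 ^ 2)
    (hlx : cosh ((l • x) 2) ^ 2 = (l • x) 0 ^ 2 + (l • x) 1 ^ 2) :
    cosh (l * x 2) = l * cosh (x 2) := by
  simp only [PiLp.smul_apply, smul_eq_mul] at hlx
  have hsq : cosh (l * x 2) ^ 2 = (l * cosh (x 2)) ^ 2 := by
    rw [hlx]
    linear_combination -l ^ 2 * hx
  exact (sq_eq_sq₀ (cosh_pos _).le (by positivity)).mp hsq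

theorem stmt4_general (t₀ : ℝ) (heq : Real.cosh t₀ = t₀ * Real.sinh t₀)
    (x : R3) (hx : x ∈ Cat0 t₀) :
    ∀ l : ℝ, 0 < l → l • x ∈ Cat0 t₀ → l = 1 := by
  rintro l hl ⟨hlx_cat, hlx_height⟩
  obtain ⟨hx_cat, hx_height⟩ := hx
  have hcosh := cosh_mul_eq_mul_cosh_of_smul_mem hl hx_cat hlx_cat
  simp only [PiLp.smul_apply, smul_eq_mul, abs_mul, abs_of_pos hl] at hlx_height
  refine eq_one_of_cosh_mul_eq_mul_cosh heq hl (abs_nonneg (x 2)) hx_height hlx_height ?_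
  rw [← cosh_abs (l * x 2), abs_mul, abs_of_pos hl] at hcosh
  rwa [cosh_abs]

/-- For every `x ∈ Cat₀`, the open ray from the origin through `x` meets `Cat₀`
exactly at `x`: if `λ • x ∈ Cat₀` for some `λ > 0`, then `λ = 1`. -/
theorem stmt4 (t₀ : ℝ) (ht₀ : 0 < t₀) (heq : Real.cosh t₀ = t₀ * Real.sinh t₀)
    (x : R3) (hx : x ∈ Cat0 t₀) :
    ∀ l : ℝ, 0 < l → l • x ∈ Cat0 t₀ → l = 1 :=
  stmt4_general t₀ heq x hx
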